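/- arXiv:1305.5794 — 4 statements merged into one kernel-verified Lean document; each statement's English description precedes it below -/
import Mathlib

section
/- Let a, μ : ℝ → ℝ be smooth T-periodic functions with a(t) > 0 and μ(t) > 0 for all t, and let x₀ ∈ (0, π/2), t₀ ∈ ℝ. Define K⁺ = max_{t∈[0,T]} μ(t)/a(t) and K⁻ = min_{t∈[0,T]} μ(t)/a(t). Then there exists ε ∈ [cos(x₀)/K⁺, cos(x₀)/K⁻] such that the solution of ẋ = −a(t) cos x + ε μ(t) with x(t₀) = x₀ is T-periodic. -/
open Real Set

lemma lipCos : LipschitzWith 1 Real.cos :=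
  lipschitzWith_of_nnnorm_deriv_le Real.differentiable_cos (fun x => by
    rw [Real.deriv_cos']
    simp only [← NNReal.coe_le_coe, coe_nnnorm, Real.norm_eq_abs, NNReal.coe_one, abs_neg]
    exact Real.abs_sin_le_one x)


lemma myGlobalUnique (v : ℝ → ℝ → ℝ) (L : NNReal) (hL : ∀ t, LipschitzWith L (v t))
    {f g : ℝ → ℝ} {t₀ : ℝ} (hf : ∀ t, HasDerivAt f (v t (f t)) t)
    (hg : ∀ t, HasDerivAt g (v t (g t)) t) (heq : f t₀ = g t₀) : f = g := by
  funext t'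
  have h := ODE_solution_unique_of_mem_Ioo (v := v) (s := fun _ => univ)
    (fun t _ => (hL t).lipschitzOnWith) (t₀ := t₀) (a := min t₀ t' - 1) (b := max t₀ t' + 1)
    ⟨by linarith [min_le_left t₀ t'], by linarith [le_max_left t₀ t']⟩
    (fun t _ => ⟨hf t, trivial⟩) (fun t _ => ⟨hg t, trivial⟩) heq
  exact h ⟨by linarith [min_le_right t₀ t'], by linarith [le_max_right t₀ t']⟩

lemma myGlobalExist (v : ℝ → ℝ → ℝ) (L : NNReal) (C : ℝ)
    (hL : ∀ t, LipschitzWith L (v t)) (hcont : ∀ x, Continuous fun t => v t x)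
    (hC : ∀ t x, |v t x| ≤ C) (t₀ x₀ : ℝ) :
    ∃ f : ℝ → ℝ, f t₀ = x₀ ∧ ∀ t, HasDerivAt f (v t (f t)) t := by
  have hC0 : 0 ≤ C := (abs_nonneg _).trans (hC t₀ x₀)
  have hpl : ∀ n : ℕ, IsPicardLindelof v (tmin := t₀ - (n + 1)) (tmax := t₀ + (n + 1))
      ⟨t₀, by constructor <;> linarith [(n.cast_nonneg : (0:ℝ) ≤ n)]⟩ x₀
      (C * (n + 1)).toNNReal 0 C.toNNReal L := by
    intro n
    have hn : (0:ℝ) ≤ n := n.cast_nonneg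
    refine ⟨fun t _ => (hL t).lipschitzOnWith, fun x _ => (hcont x).continuousOn,
      fun t _ x _ => by simpa [Real.norm_eq_abs, Real.coe_toNNReal _ hC0] using hC t x, ?_⟩
    apply le_of_eq
    simp [Real.coe_toNNReal _ hC0, Real.coe_toNNReal _ (by positivity : (0:ℝ) ≤ C * (n + 1))]
  choose F hF0 hF using fun n => (hpl n).exists_eq_forall_mem_Icc_hasDerivWithinAt₀
  replace hF0 : ∀ n, F n t₀ = x₀ := hF0
  -- derivative at interior points
  have hAt : ∀ (n : ℕ) (t : ℝ), |t - t₀| < n + 1 → HasDerivAt (F n) (v t (F n t)) t := by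
    intro n t ht
    rw [abs_lt] at ht
    exact (hF n t ⟨by linarith [ht.1], by linarith [ht.2]⟩).hasDerivAt
      (Icc_mem_nhds (by linarith [ht.1]) (by linarith [ht.2]))
  -- consistency
  have hEq : ∀ (n m : ℕ) (t : ℝ), |t - t₀| < n + 1 → |t - t₀| < m + 1 → F n t = F m t := by
    intro n m t hn hm
    set r : ℝ := min ((n:ℝ) + 1) ((m:ℝ) + 1) with hr
    have hr0 : 0 < r := lt_min (by positivity) (by positivity)
    have hmem : ∀ s : ℝ, s ∈ Ioo (t₀ - r) (t₀ + r) → |s - t₀| < n + 1 ∧ |s - t₀| < m + 1 := by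
      intro s hs
      have h1 : |s - t₀| < r := abs_lt.mpr ⟨by linarith [hs.1], by linarith [hs.2]⟩
      exact ⟨h1.trans_le (min_le_left _ _), h1.trans_le (min_le_right _ _)⟩
    have key := ODE_solution_unique_of_mem_Ioo (v := v) (s := fun _ => univ)
      (fun t _ => (hL t).lipschitzOnWith) (t₀ := t₀) (a := t₀ - r) (b := t₀ + r)
      ⟨by linarith, by linarith⟩
      (fun s hs => ⟨hAt n s (hmem s hs).1, trivial⟩)
      (fun s hs => ⟨hAt m s (hmem s hs).2, trivial⟩)
      (by rw [hF0 n, hF0 m])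
    rw [abs_lt] at hn hm
    have h1 : t₀ - t < r := lt_min (by linarith [hn.1]) (by linarith [hm.1])
    have h2 : t - t₀ < r := lt_min (by linarith [hn.2]) (by linarith [hm.2])
    exact key ⟨by linarith, by linarith⟩
  -- glue
  refine ⟨fun t => F ⌈|t - t₀|⌉₊ t, ?_, ?_⟩
  · simpa using hF0 ⌈|t₀ - t₀|⌉₊
  · intro t
    set n : ℕ := ⌈|t - t₀|⌉₊ with hn
    have ht : |t - t₀| < n + 1 := (Nat.le_ceil _).trans_lt (lt_add_one _)
    have hopen : IsOpen {s : ℝ | |s - t₀| < (n:ℝ) + 1} := by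
      have : Continuous fun s : ℝ => |s - t₀| := (continuous_id.sub continuous_const).abs
      exact isOpen_lt this continuous_const
    have hev : (fun s => F ⌈|s - t₀|⌉₊ s) =ᶠ[nhds t] F n := by
      filter_upwards [hopen.mem_nhds ht] with s hs
      exact hEq ⌈|s - t₀|⌉₊ n s ((Nat.le_ceil _).trans_lt (lt_add_one _)) hs
    have hft : F ⌈|t - t₀|⌉₊ t = F n t := by rw [← hn]
    have := (hAt n t ht).congr_of_eventuallyEq hev
    simpa [← hn, hev.eq_of_nhds] using this

lemma myBarrier {f f' : ℝ → ℝ} {L t₀ : ℝ} (hL : 0 ≤ L)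
    (hd : ∀ t, HasDerivAt f (f' t) t)
    (hb : ∀ t, 0 ≤ f t → f' t ≤ L * f t) (h0 : f t₀ ≤ 0) :
    ∀ t, t₀ ≤ t → f t ≤ 0 := by
  intro t₁ ht₁
  by_contra hcon
  push_neg at hcon
  have hfd : Differentiable ℝ f := fun t => (hd t).differentiableAt
  have hfc : Continuous f := hfd.continuous
  set S : Set ℝ := Icc t₀ t₁ ∩ {s | f s ≤ 0} with hS
  have hScpt : IsCompact S := isCompact_Icc.inter_right (isClosed_le hfc continuous_const)
  have hSne : S.Nonempty := ⟨t₀, ⟨le_refl _, ht₁⟩, h0⟩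
  set t₂ := sSup S with ht₂
  have hmem : t₂ ∈ S := hScpt.sSup_mem hSne
  have ht₂₁ : t₂ < t₁ := lt_of_le_of_ne hmem.1.2 (fun h => by
    have h2 := hmem.2; rw [h] at h2; simp only [mem_setOf_eq] at h2; linarith)
  have hpos : ∀ s, t₂ < s → s ≤ t₁ → 0 < f s := by
    intro s h1 h2
    by_contra h
    push_neg at h
    have : s ∈ S := ⟨⟨hmem.1.1.trans h1.le, h2⟩, h⟩
    have := le_csSup hScpt.bddAbove this
    linarith
  -- the auxiliary function g
  set g : ℝ → ℝ := fun s => f s * Real.exp (-L * s) with hg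
  have hgd : ∀ s, HasDerivAt g ((f' s - L * f s) * Real.exp (-L * s)) s := by
    intro s
    have he : HasDerivAt (fun s : ℝ => Real.exp (-L * s)) (Real.exp (-L * s) * (-L)) s := by
      simpa using (((hasDerivAt_id s).const_mul (-L)).exp)
    have : HasDerivAt (fun y => f y * Real.exp (-L * y)) _ s := (hd s).mul he
    convert this using 1
    ring
  have hanti : AntitoneOn g (Icc t₂ t₁) := by
    apply antitoneOn_of_deriv_nonpos (convex_Icc _ _)
    · exact (hfc.mul (Real.continuous_exp.comp (continuous_const.mul continuous_id))).continuousOn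
    · intro s _
      exact ((hgd s).differentiableAt).differentiableWithinAt
    · intro s hs
      rw [interior_Icc] at hs
      rw [(hgd s).deriv]
      have hfs : 0 < f s := hpos s hs.1 hs.2.le
      have := hb s hfs.le
      have hexp := Real.exp_pos (-L * s)
      nlinarith
  have h1 : g t₁ ≤ g t₂ := hanti ⟨le_refl _, ht₂₁.le⟩ ⟨ht₂₁.le, le_refl _⟩ ht₂₁.le
  have h2 : g t₂ ≤ 0 := mul_nonpos_of_nonpos_of_nonneg hmem.2 (Real.exp_pos _).le
  have h3 : 0 < g t₁ := mul_pos hcon (Real.exp_pos _)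
  linarith


theorem stmt_0 (T t₀ x₀ : ℝ) (hT : 0 < T) (a μ : ℝ → ℝ)
    (ha : ContDiff ℝ (⊤ : ℕ∞) a) (hμ : ContDiff ℝ (⊤ : ℕ∞) μ)
    (haT : Function.Periodic a T) (hμT : Function.Periodic μ T)
    (hapos : ∀ t, 0 < a t) (hμpos : ∀ t, 0 < μ t)
    (hx₀ : x₀ ∈ Set.Ioo 0 (π / 2))
    (Kp Km : ℝ)
    (hKp : IsGreatest ((fun t => μ t / a t) '' Set.Icc 0 T) Kp)
    (hKm : IsLeast ((fun t => μ t / a t) '' Set.Icc 0 T) Km) :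
    ∃ ε ∈ Set.Icc (Real.cos x₀ / Kp) (Real.cos x₀ / Km),
      ∃ x : ℝ → ℝ,
        (∀ t, HasDerivAt x (-(a t) * Real.cos (x t) + ε * μ t) t) ∧
        x t₀ = x₀ ∧ Function.Periodic x T := by
  have hac : Continuous a := ha.continuous
  have hμc : Continuous μ := hμ.continuous
  have hπ : 0 < π / 2 := by positivity
  have hcos : 0 < Real.cos x₀ :=
    Real.cos_pos_of_mem_Ioo ⟨by linarith [hx₀.1], hx₀.2⟩
  -- bounds on a and μ
  obtain ⟨ta, hta, hMa⟩ := isCompact_Icc.exists_isMaxOn (⟨0, le_refl _, hT.le⟩ : (Icc (0:ℝ) T).Nonempty)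
    hac.continuousOn
  obtain ⟨tμ, htμ, hMμ⟩ := isCompact_Icc.exists_isMaxOn (⟨0, le_refl _, hT.le⟩ : (Icc (0:ℝ) T).Nonempty)
    hμc.continuousOn
  set Ma := a ta with hMadef
  set Mμ := μ tμ with hMμdef
  have hMa0 : 0 < Ma := hapos ta
  have hMμ0 : 0 < Mμ := hμpos tμ
  have habd : ∀ t, a t ≤ Ma := by
    intro t
    obtain ⟨y, hy, hay⟩ := haT.exists_mem_Ico₀ hT t
    rw [hay]; exact hMa ⟨hy.1, hy.2.le⟩
  have hμbd : ∀ t, μ t ≤ Mμ := by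
    intro t
    obtain ⟨y, hy, hμy⟩ := hμT.exists_mem_Ico₀ hT t
    rw [hμy]; exact hMμ ⟨hy.1, hy.2.le⟩
  -- bounds from Km, Kp
  have hKT : Function.Periodic (fun t => μ t / a t) T := hμT.div haT
  have hKm_le : ∀ t, Km * a t ≤ μ t := by
    intro t
    obtain ⟨y, hy, hKy⟩ := hKT.exists_mem_Ico₀ hT t
    have h1 : Km ≤ μ t / a t := hKy ▸ hKm.2 (mem_image_of_mem _ ⟨hy.1, hy.2.le⟩)
    rwa [le_div_iff₀ (hapos t)] at h1
  have hKp_ge : ∀ t, μ t ≤ Kp * a t := by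
    intro t
    obtain ⟨y, hy, hKy⟩ := hKT.exists_mem_Ico₀ hT t
    have h1 : μ t / a t ≤ Kp := hKy ▸ hKp.2 (mem_image_of_mem _ ⟨hy.1, hy.2.le⟩)
    rwa [div_le_iff₀ (hapos t)] at h1
  have hKm0 : 0 < Km := by
    obtain ⟨s, _, hs⟩ := hKm.1
    rw [← hs]; exact div_pos (hμpos s) (hapos s)
  have hKmKp : Km ≤ Kp := hKp.2 hKm.1
  have hKp0 : 0 < Kp := hKm0.trans_le hKmKp
  set εmin := Real.cos x₀ / Kp with hεmin
  set εmax := Real.cos x₀ / Km with hεmax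
  have hεmin0 : 0 < εmin := div_pos hcos hKp0
  have hεle : εmin ≤ εmax := by
    rw [hεmin, hεmax, div_le_div_iff₀ hKp0 hKm0]
    nlinarith
  -- the vector field
  set v : ℝ → ℝ → ℝ → ℝ := fun ε t x => -(a t) * Real.cos x + ε * μ t with hv
  set L : NNReal := Ma.toNNReal with hL
  have hLcoe : (L : ℝ) = Ma := Real.coe_toNNReal _ hMa0.le
  have hvlip : ∀ ε t, LipschitzWith L (v ε t) := by
    intro ε t
    apply LipschitzWith.of_dist_le_mul
    intro x y
    rw [Real.dist_eq, Real.dist_eq, hLcoe]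
    have h1 : |Real.cos x - Real.cos y| ≤ |x - y| := by
      have := lipCos.dist_le_mul x y
      simpa [Real.dist_eq] using this
    have h2 : v ε t x - v ε t y = a t * (Real.cos y - Real.cos x) := by
      simp only [hv]; ring
    rw [h2, abs_mul, abs_of_pos (hapos t), abs_sub_comm]
    exact mul_le_mul (habd t) h1 (abs_nonneg _) hMa0.le
  have hvcont : ∀ ε x, Continuous fun t => v ε t x := by
    intro ε x
    exact (hac.neg.mul continuous_const).add (continuous_const.mul hμc)
  have hvbdd : ∀ ε t x, |v ε t x| ≤ Ma + |ε| * Mμ := by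
    intro ε t x
    calc |v ε t x| ≤ |(-(a t)) * Real.cos x| + |ε * μ t| := abs_add_le _ _
      _ = a t * |Real.cos x| + |ε| * μ t := by
          rw [abs_mul, abs_mul, abs_neg, abs_of_pos (hapos t), abs_of_pos (hμpos t)]
      _ ≤ Ma + |ε| * Mμ := by
          have h1 := Real.abs_cos_le_one x
          have h2 := habd t
          have h3 := hμbd t
          have h4 := (hapos t).le
          have h5 := abs_nonneg ε
          nlinarith
  -- the solutions
  have hsol : ∀ ε : ℝ, ∃ f : ℝ → ℝ, f t₀ = x₀ ∧ ∀ t, HasDerivAt f (v ε t (f t)) t :=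
    fun ε => myGlobalExist (v ε) L (Ma + |ε| * Mμ) (hvlip ε) (hvcont ε) (hvbdd ε) t₀ x₀
  choose sol hsol0 hsolD using hsol
  have hsolc : ∀ ε, Continuous (sol ε) :=
    fun ε => (Differentiable.continuous fun t => (hsolD ε t).differentiableAt)
  set φ : ℝ → ℝ := fun ε => sol ε (t₀ + T) with hφ
  -- Lipschitz continuity of φ in ε
  set B : ℝ := Mμ * ((Real.exp (Ma * T) - 1) / Ma) with hB
  have hB0 : 0 ≤ B := by
    have h1 : (1:ℝ) ≤ Real.exp (Ma * T) := Real.one_le_exp (by positivity)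
    have h2 : 0 ≤ (Real.exp (Ma * T) - 1) / Ma := div_nonneg (by linarith) hMa0.le
    rw [hB]
    exact mul_nonneg hMμ0.le h2
  have hφlip : ∀ ε δ, dist (φ ε) (φ δ) ≤ B * dist ε δ := by
    intro ε δ
    have key := dist_le_of_approx_trajectories_ODE (v := v ε) (K := L)
      (f := sol ε) (f' := fun t => v ε t (sol ε t))
      (g := sol δ) (g' := fun t => v δ t (sol δ t))
      (εf := 0) (εg := Mμ * dist ε δ) (δ := 0) (a := t₀) (b := t₀ + T)
      (hvlip ε)
      (hsolc ε).continuousOn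
      (fun t _ => (hsolD ε t).hasDerivWithinAt)
      (fun t _ => by simp)
      (hsolc δ).continuousOn
      (fun t _ => (hsolD δ t).hasDerivWithinAt)
      (fun t _ => by
        have hE : v δ t (sol δ t) - v ε t (sol δ t) = (δ - ε) * μ t := by
          simp only [hv]; ring
        rw [Real.dist_eq, hE, abs_mul, abs_of_pos (hμpos t), Real.dist_eq, abs_sub_comm]
        have h1 := hμbd t
        have h2 := (hμpos t).le
        nlinarith [abs_nonneg (ε - δ)])
      (by rw [hsol0, hsol0]; simp)
    have h2 := key (t₀ + T) ⟨by linarith, le_refl _⟩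
    rw [zero_add, add_sub_cancel_left] at h2
    have hgb : gronwallBound 0 (L : ℝ) (Mμ * dist ε δ) T = B * dist ε δ := by
      rw [gronwallBound_of_K_ne_0 (by rw [hLcoe]; exact hMa0.ne')]
      rw [hLcoe, hB]
      field_simp
      ring
    rw [hgb] at h2
    exact h2
  have hφc : Continuous φ := by
    have : LipschitzWith B.toNNReal φ := LipschitzWith.of_dist_le_mul fun x y => by
      rw [Real.coe_toNNReal _ hB0]; exact hφlip x y
    exact this.continuous
  -- sign condition at εmax
  have hsign_max : x₀ ≤ φ εmax := by
    have hbar := myBarrier (f := fun t => x₀ - sol εmax t)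
      (f' := fun t => -(v εmax t (sol εmax t))) (L := Ma) (t₀ := t₀) hMa0.le
      (fun t => (hsolD εmax t).const_sub x₀)
      (fun t hft => by
        have hft' : (0:ℝ) ≤ x₀ - sol εmax t := hft
        have hx : sol εmax t ≤ x₀ := by linarith
        have h1 : Real.cos x₀ * a t ≤ εmax * μ t := by
          have h2 : Km * a t ≤ μ t := hKm_le t
          have h3 : εmax * (Km * a t) ≤ εmax * μ t :=
            mul_le_mul_of_nonneg_left h2 (by positivity)
          calc Real.cos x₀ * a t = εmax * (Km * a t) := by
                rw [hεmax]; field_simp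
            _ ≤ εmax * μ t := h3
        have h4 : Real.cos (sol εmax t) - Real.cos x₀ ≤ x₀ - sol εmax t := by
          have := lipCos.dist_le_mul (sol εmax t) x₀
          rw [Real.dist_eq, Real.dist_eq, NNReal.coe_one, one_mul] at this
          calc Real.cos (sol εmax t) - Real.cos x₀ ≤ |Real.cos (sol εmax t) - Real.cos x₀| :=
                le_abs_self _
            _ ≤ |sol εmax t - x₀| := this
            _ = x₀ - sol εmax t := by rw [abs_sub_comm, abs_of_nonneg (by linarith)]
        have h5 := hapos t
        have h6 := habd t
        simp only [hv, neg_add, neg_mul, neg_neg]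
        nlinarith)
      (by show x₀ - sol εmax t₀ ≤ 0; rw [hsol0]; simp)
    have h7 : x₀ - sol εmax (t₀ + T) ≤ 0 := hbar (t₀ + T) (by linarith)
    show x₀ ≤ sol εmax (t₀ + T)
    linarith
  -- sign condition at εmin
  have hsign_min : φ εmin ≤ x₀ := by
    have hbar := myBarrier (f := fun t => sol εmin t - x₀)
      (f' := fun t => v εmin t (sol εmin t)) (L := Ma) (t₀ := t₀) hMa0.le
      (fun t => (hsolD εmin t).sub_const x₀)
      (fun t hft => by
        have hft' : (0:ℝ) ≤ sol εmin t - x₀ := hft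
        have hx : x₀ ≤ sol εmin t := by linarith
        have h1 : εmin * μ t ≤ Real.cos x₀ * a t := by
          have h2 : μ t ≤ Kp * a t := hKp_ge t
          have h3 : εmin * μ t ≤ εmin * (Kp * a t) :=
            mul_le_mul_of_nonneg_left h2 hεmin0.le
          calc εmin * μ t ≤ εmin * (Kp * a t) := h3
            _ = Real.cos x₀ * a t := by rw [hεmin]; field_simp
        have h4 : Real.cos x₀ - Real.cos (sol εmin t) ≤ sol εmin t - x₀ := by
          have := lipCos.dist_le_mul x₀ (sol εmin t)
          rw [Real.dist_eq, Real.dist_eq, NNReal.coe_one, one_mul] at this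
          calc Real.cos x₀ - Real.cos (sol εmin t) ≤ |Real.cos x₀ - Real.cos (sol εmin t)| :=
                le_abs_self _
            _ ≤ |x₀ - sol εmin t| := this
            _ = sol εmin t - x₀ := by rw [abs_sub_comm, abs_of_nonneg (by linarith)]
        have h5 := hapos t
        have h6 := habd t
        simp only [hv]
        nlinarith)
      (by show sol εmin t₀ - x₀ ≤ 0; rw [hsol0]; simp)
    have h7 : sol εmin (t₀ + T) - x₀ ≤ 0 := hbar (t₀ + T) (by linarith)
    show sol εmin (t₀ + T) ≤ x₀
    linarith
  -- intermediate value theorem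
  obtain ⟨ε, hεmem, hφε⟩ := intermediate_value_Icc hεle hφc.continuousOn
    ⟨hsign_min, hsign_max⟩
  refine ⟨ε, hεmem, sol ε, fun t => hsolD ε t, hsol0 ε, ?_⟩
  -- periodicity
  have hyD : ∀ t, HasDerivAt (fun s => sol ε (s + T)) (v ε t (sol ε (t + T))) t := by
    intro t
    have h := (hsolD ε (t + T)).comp t ((hasDerivAt_id t).add_const T)
    simp only [mul_one] at h
    have hveq : v ε (t + T) (sol ε (t + T)) = v ε t (sol ε (t + T)) := by
      simp only [hv, haT t, hμT t]
    rwa [hveq] at h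
  have heq : sol ε (t₀ + T) = sol ε t₀ := by
    rw [hsol0 ε]
    exact hφε
  have hper := myGlobalUnique (v ε) L (hvlip ε) hyD (hsolD ε) heq
  exact fun t => congrFun hper t
end

section
/- Let a, μ : ℝ → ℝ be smooth T-periodic functions with a, μ > 0, x₀ ∈ (0, π/2), K⁺ = max μ/a, K⁻ = min μ/a, and suppose K⁺/K⁻ < 1/cos(x₀). Let ε > 0 be such that the solution x(t) of ẋ = −a(t) cos x + ε μ(t) with x(t₀) = x₀ is T-periodic and ε ∈ [cos(x₀)/K⁺, cos(x₀)/K⁻]. Then for all t ∈ ℝ, x(t) ∈ [x⁻, x⁺] ⊂ (0, π/2), where x⁻ = arccos((K⁺/K⁻) cos x₀) and x⁺ = arccos((K⁻/K⁺) cos x₀). -/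
open Real Set

/-- Band trap: if the derivative of `x` is nonnegative whenever `x t ∈ [lo, hi]`,
then `x` cannot cross from a value `≥ hi` down to a value `≤ lo`. -/
lemma band_trap (x f : ℝ → ℝ) (hx : ∀ t, HasDerivAt x (f t) t)
    (lo hi : ℝ) (hlohi : lo < hi)
    (hf : ∀ t, x t ∈ Set.Icc lo hi → 0 ≤ f t)
    (s₁ tc : ℝ) (hs : s₁ ≤ tc) (h1 : hi ≤ x s₁) (h2 : x tc ≤ lo) : False := by
  have hxc : Continuous x := continuous_iff_continuousAt.2 fun t => (hx t).continuousAt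
  set S : Set ℝ := Set.Icc s₁ tc ∩ {t | hi ≤ x t} with hSdef
  have hScl : IsClosed S := isClosed_Icc.inter (isClosed_le continuous_const hxc)
  have hSne : S.Nonempty := ⟨s₁, ⟨le_refl _, hs⟩, h1⟩
  have hSbdd : BddAbove S := (bddAbove_Icc (a := s₁) (b := tc)).mono Set.inter_subset_left
  set w₂ : ℝ := sSup S with hw₂def
  have hw₂mem : w₂ ∈ S := hScl.csSup_mem hSne hSbdd
  have hw₂Icc : w₂ ∈ Set.Icc s₁ tc := hw₂mem.1
  have hw₂x : hi ≤ x w₂ := hw₂mem.2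
  have hw₂lt : w₂ < tc := lt_of_le_of_ne hw₂Icc.2 (by
    intro h; rw [h] at hw₂x; linarith)
  have hafter : ∀ t, w₂ < t → t ≤ tc → x t < hi := by
    intro t ht htc
    by_contra hcon
    push_neg at hcon
    have : t ∈ S := ⟨⟨le_trans hw₂Icc.1 ht.le, htc⟩, hcon⟩
    have := le_csSup hSbdd this
    linarith
  set S2 : Set ℝ := Set.Icc w₂ tc ∩ {t | x t ≤ lo} with hS2def
  have hS2cl : IsClosed S2 := isClosed_Icc.inter (isClosed_le hxc continuous_const)
  have hS2ne : S2.Nonempty := ⟨tc, ⟨hw₂lt.le, le_refl _⟩, h2⟩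
  have hS2bdd : BddBelow S2 := (bddBelow_Icc : BddBelow (Set.Icc w₂ tc)).mono Set.inter_subset_left
  set w₃ : ℝ := sInf S2 with hw₃def
  have hw₃mem : w₃ ∈ S2 := hS2cl.csInf_mem hS2ne hS2bdd
  have hw₃Icc : w₃ ∈ Set.Icc w₂ tc := hw₃mem.1
  have hw₃x : x w₃ ≤ lo := hw₃mem.2
  have hw₂w₃ : w₂ < w₃ := lt_of_le_of_ne hw₃Icc.1 (by
    intro h; rw [← h] at hw₃x; linarith)
  have hband : ∀ t ∈ Set.Ioo w₂ w₃, x t ∈ Set.Icc lo hi := by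
    intro t ht
    constructor
    · by_contra hcon
      push_neg at hcon
      have : t ∈ S2 := ⟨⟨ht.1.le, le_trans ht.2.le hw₃Icc.2⟩, hcon.le⟩
      have := csInf_le hS2bdd this
      linarith [ht.2]
    · exact (hafter t ht.1 (le_trans ht.2.le hw₃Icc.2)).le
  have hmono : MonotoneOn x (Set.Icc w₂ w₃) := by
    apply monotoneOn_of_deriv_nonneg (convex_Icc w₂ w₃) hxc.continuousOn
    · intro t ht
      exact ((hx t).differentiableAt).differentiableWithinAt
    · intro t ht
      rw [interior_Icc] at ht
      rw [(hx t).deriv]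
      exact hf t (hband t ht)
  have := hmono (Set.left_mem_Icc.2 hw₂w₃.le) (Set.right_mem_Icc.2 hw₂w₃.le) hw₂w₃.le
  linarith

theorem stmt_3 (T t₀ x₀ : ℝ) (hT : 0 < T) (a μ : ℝ → ℝ)
    (ha : ContDiff ℝ (⊤ : ℕ∞) a) (hμ : ContDiff ℝ (⊤ : ℕ∞) μ)
    (haT : Function.Periodic a T) (hμT : Function.Periodic μ T)
    (hapos : ∀ t, 0 < a t) (hμpos : ∀ t, 0 < μ t)
    (hx₀ : x₀ ∈ Set.Ioo 0 (π / 2))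
    (Kp Km : ℝ)
    (hKp : IsGreatest ((fun t => μ t / a t) '' Set.Icc 0 T) Kp)
    (hKm : IsLeast ((fun t => μ t / a t) '' Set.Icc 0 T) Km)
    (hK : Kp / Km < 1 / Real.cos x₀)
    (ε : ℝ) (hεpos : 0 < ε)
    (hε : ε ∈ Set.Icc (Real.cos x₀ / Kp) (Real.cos x₀ / Km))
    (x : ℝ → ℝ)
    (hx : ∀ t, HasDerivAt x (-(a t) * Real.cos (x t) + ε * μ t) t)
    (hxt₀ : x t₀ = x₀) (hper : Function.Periodic x T) :
    (∀ t : ℝ, x t ∈ Set.Icc (Real.arccos (Kp / Km * Real.cos x₀))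
        (Real.arccos (Km / Kp * Real.cos x₀))) ∧
    Set.Icc (Real.arccos (Kp / Km * Real.cos x₀))
        (Real.arccos (Km / Kp * Real.cos x₀)) ⊆ Set.Ioo 0 (π / 2) := by
  obtain ⟨hx₀0, hx₀2⟩ := hx₀
  have hπ := Real.pi_pos
  have hx₀pi : x₀ ≤ π := by linarith
  have hcx₀pos : 0 < Real.cos x₀ := Real.cos_pos_of_mem_Ioo ⟨by linarith, hx₀2⟩
  have hcx₀lt1 : Real.cos x₀ < 1 := by
    have h := Real.cos_lt_cos_of_nonneg_of_le_pi (le_refl 0) hx₀pi hx₀0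
    rwa [Real.cos_zero] at h
  -- positivity of Km, Kp
  have hKmpos : 0 < Km := by
    obtain ⟨⟨tm, _, htmeq⟩, _⟩ := hKm
    rw [← htmeq]
    exact div_pos (hμpos tm) (hapos tm)
  have hKmKp : Km ≤ Kp := hKp.2 hKm.1
  have hKppos : 0 < Kp := lt_of_lt_of_le hKmpos hKmKp
  -- μ/a is bounded between Km and Kp everywhere
  have hrper : Function.Periodic (fun t => μ t / a t) T := hμT.div haT
  have hr : ∀ t, Km ≤ μ t / a t ∧ μ t / a t ≤ Kp := by
    intro t
    have hmem := sub_toIcoDiv_zsmul_mem_Ico hT 0 t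
    set s : ℝ := t - toIcoDiv hT 0 t • T with hsdef
    have hsIcc : s ∈ Set.Icc 0 T := by
      rcases hmem with ⟨h1, h2⟩
      exact ⟨h1, by linarith [h2]⟩
    have heq : μ s / a s = μ t / a t := by
      have : (fun t => μ t / a t) (t - (toIcoDiv hT 0 t : ℝ) * T) = (fun t => μ t / a t) t :=
        hrper.sub_int_mul_eq (toIcoDiv hT 0 t)
      simpa [hsdef, zsmul_eq_mul] using this
    have hmem2 : μ s / a s ∈ (fun t => μ t / a t) '' Set.Icc 0 T :=
      Set.mem_image_of_mem _ hsIcc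
    rw [← heq]
    exact ⟨hKm.2 hmem2, hKp.2 hmem2⟩
  -- abbreviations
  set cm : ℝ := Kp / Km * Real.cos x₀ with hcmdef
  set cp : ℝ := Km / Kp * Real.cos x₀ with hcpdef
  have hcm1 : cm < 1 := by
    have := (mul_lt_mul_of_pos_right hK hcx₀pos)
    rwa [one_div, inv_mul_cancel₀ (ne_of_gt hcx₀pos)] at this
  have hcmpos : 0 < cm := mul_pos (div_pos hKppos hKmpos) hcx₀pos
  have hcppos : 0 < cp := mul_pos (div_pos hKmpos hKppos) hcx₀pos
  have hcp_le : cp ≤ Real.cos x₀ := by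
    have h1 : Km / Kp ≤ 1 := (div_le_one hKppos).2 hKmKp
    calc cp ≤ 1 * Real.cos x₀ := mul_le_mul_of_nonneg_right h1 hcx₀pos.le
    _ = Real.cos x₀ := one_mul _
  have hcp_lt1 : cp < 1 := lt_of_le_of_lt hcp_le hcx₀lt1
  have hcm_ge : Real.cos x₀ ≤ cm := by
    have h1 : 1 ≤ Kp / Km := (one_le_div hKmpos).2 hKmKp
    calc Real.cos x₀ = 1 * Real.cos x₀ := (one_mul _).symm
    _ ≤ cm := mul_le_mul_of_nonneg_right h1 hcx₀pos.le
  set xm : ℝ := Real.arccos cm with hxmdef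
  set xp : ℝ := Real.arccos cp with hxpdef
  have hxm_pos : 0 < xm := Real.arccos_pos.2 hcm1
  have hxp_pos : 0 < xp := Real.arccos_pos.2 hcp_lt1
  have hxm_half : xm < π / 2 := Real.arccos_lt_pi_div_two.2 hcmpos
  have hxp_half : xp < π / 2 := Real.arccos_lt_pi_div_two.2 hcppos
  have hxm_pi : xm ≤ π := Real.arccos_le_pi _
  have hxp_pi : xp ≤ π := Real.arccos_le_pi _
  have hcos_xm : Real.cos xm = cm := Real.cos_arccos (by linarith) hcm1.le
  have hcos_xp : Real.cos xp = cp := Real.cos_arccos (by linarith) hcp_lt1.le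
  have hx₀_le_xp : x₀ ≤ xp := by
    by_contra hcon
    push_neg at hcon
    have := Real.cos_lt_cos_of_nonneg_of_le_pi (Real.arccos_nonneg _) hx₀pi hcon
    rw [hcos_xp] at this
    linarith
  have hxm_le_x₀ : xm ≤ x₀ := by
    by_contra hcon
    push_neg at hcon
    have := Real.cos_lt_cos_of_nonneg_of_le_pi (le_of_lt hx₀0) hxm_pi hcon
    rw [hcos_xm] at this
    linarith
  have hεKm : cp ≤ ε * Km := by
    have h1 : Real.cos x₀ / Kp ≤ ε := hε.1
    have h2 : Real.cos x₀ / Kp * Km ≤ ε * Km := mul_le_mul_of_nonneg_right h1 hKmpos.le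
    calc cp = Real.cos x₀ / Kp * Km := by ring
    _ ≤ ε * Km := h2
  have hεKp : ε * Kp ≤ cm := by
    have h1 : ε ≤ Real.cos x₀ / Km := hε.2
    have h2 : ε * Kp ≤ Real.cos x₀ / Km * Kp := mul_le_mul_of_nonneg_right h1 hKppos.le
    calc ε * Kp ≤ Real.cos x₀ / Km * Kp := h2
    _ = cm := by ring
  set f : ℝ → ℝ := fun t => -(a t) * Real.cos (x t) + ε * μ t with hfdef
  have hxc : Continuous x := continuous_iff_continuousAt.2 fun t => (hx t).continuousAt
  -- derivative sign in the upper band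
  have hfband_up : ∀ t, x t ∈ Set.Icc xp (2 * π - xp) → 0 ≤ f t := by
    intro t ht
    have hcos : Real.cos (x t) ≤ cp := by
      rcases le_or_gt (x t) π with hle | hgt
      · have := Real.cos_le_cos_of_nonneg_of_le_pi (Real.arccos_nonneg _) hle ht.1
        rwa [hcos_xp] at this
      · have h1 : Real.cos (x t) = Real.cos (2 * π - x t) := (Real.cos_two_pi_sub _).symm
        have h2 : xp ≤ 2 * π - x t := by linarith [ht.2]
        have h3 : 2 * π - x t ≤ π := by linarith
        have := Real.cos_le_cos_of_nonneg_of_le_pi (Real.arccos_nonneg _) h3 h2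
        rw [hcos_xp] at this
        linarith [h1 ▸ this]
    have hq := hr t
    have haq : μ t = μ t / a t * a t := (div_mul_cancel₀ _ (ne_of_gt (hapos t))).symm
    have h1 : cp ≤ ε * (μ t / a t) := le_trans hεKm (mul_le_mul_of_nonneg_left hq.1 hεpos.le)
    have h2 : 0 ≤ a t * (ε * (μ t / a t) - Real.cos (x t)) :=
      mul_nonneg (hapos t).le (by linarith)
    have hmul : a t * (μ t / a t) = μ t := by
      rw [mul_div_assoc']
      exact mul_div_cancel_left₀ _ (ne_of_gt (hapos _))
    have h3 : a t * (ε * (μ t / a t) - Real.cos (x t)) = ε * μ t - a t * Real.cos (x t) := by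
      rw [mul_sub, mul_left_comm, hmul]
    show (0:ℝ) ≤ -(a t) * Real.cos (x t) + ε * μ t
    linarith [h3 ▸ h2]
  -- derivative sign in the lower band
  have hfband_down : ∀ t, x t ∈ Set.Icc (-xm) xm → f t ≤ 0 := by
    intro t ht
    have habs : |x t| ≤ xm := abs_le.2 ⟨ht.1, ht.2⟩
    have hcos : cm ≤ Real.cos (x t) := by
      have := Real.cos_le_cos_of_nonneg_of_le_pi (abs_nonneg (x t)) hxm_pi habs
      rw [hcos_xm, Real.cos_abs] at this
      linarith
    have hq := hr t
    have haq : μ t = μ t / a t * a t := (div_mul_cancel₀ _ (ne_of_gt (hapos t))).symm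
    have h1 : ε * (μ t / a t) ≤ cm := le_trans (mul_le_mul_of_nonneg_left hq.2 hεpos.le) hεKp
    have h2 : a t * (ε * (μ t / a t) - Real.cos (x t)) ≤ 0 :=
      mul_nonpos_of_nonneg_of_nonpos (hapos t).le (by linarith)
    have hmul : a t * (μ t / a t) = μ t := by
      rw [mul_div_assoc']
      exact mul_div_cancel_left₀ _ (ne_of_gt (hapos _))
    have h3 : a t * (ε * (μ t / a t) - Real.cos (x t)) = ε * μ t - a t * Real.cos (x t) := by
      rw [mul_sub, mul_left_comm, hmul]
    show -(a t) * Real.cos (x t) + ε * μ t ≤ (0:ℝ)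
    linarith [h3 ▸ h2]
  -- reduction of any time to a period interval
  have hreduce : ∀ t₁ t : ℝ, ∃ s ∈ Set.Icc t₁ (t₁ + T), x s = x t := by
    intro t₁ t
    refine ⟨t - toIcoDiv hT t₁ t • T, Set.Ico_subset_Icc_self (sub_toIcoDiv_zsmul_mem_Ico hT t₁ t), ?_⟩
    have : x (t - (toIcoDiv hT t₁ t : ℝ) * T) = x t := hper.sub_int_mul_eq (toIcoDiv hT t₁ t)
    simpa [zsmul_eq_mul] using this
  -- future time with value x₀
  have htfuture : ∀ s : ℝ, ∃ tc : ℝ, s ≤ tc ∧ x tc = x₀ := by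
    intro s
    obtain ⟨n, hn⟩ := exists_nat_ge ((s - t₀) / T)
    refine ⟨t₀ + n * T, ?_, ?_⟩
    · have : s - t₀ ≤ n * T := by
        have := (div_le_iff₀ hT).1 hn
        linarith
      linarith
    · rw [(hper.nat_mul n) t₀, hxt₀]
  -- upper bound
  have hub : ∀ t, x t ≤ xp := by
    by_contra hcon
    push_neg at hcon
    obtain ⟨t₁, ht₁⟩ := hcon
    obtain ⟨ts, htsmem, htsmax⟩ :=
      isCompact_Icc.exists_isMaxOn (Set.nonempty_Icc.2 (by linarith : t₁ ≤ t₁ + T))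
        hxc.continuousOn
    have hglob : ∀ t, x t ≤ x ts := by
      intro t
      obtain ⟨s, hs, hseq⟩ := hreduce t₁ t
      rw [← hseq]
      exact htsmax hs
    have hM : xp < x ts := lt_of_lt_of_le ht₁ (hglob t₁)
    have hloc : IsLocalMax x ts := Filter.Eventually.of_forall hglob
    have hderiv0 : f ts = 0 := by
      have h := hloc.deriv_eq_zero
      rwa [(hx ts).deriv] at h
    have hcosM : Real.cos (x ts) = ε * (μ ts / a ts) := by
      have h0 : -(a ts) * Real.cos (x ts) + ε * μ ts = 0 := hderiv0
      have hmul : a ts * (μ ts / a ts) = μ ts := by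
        rw [mul_div_assoc']
        exact mul_div_cancel_left₀ _ (ne_of_gt (hapos _))
      have h4 : a ts * Real.cos (x ts) = a ts * (ε * (μ ts / a ts)) := by
        rw [mul_left_comm, hmul]; linarith
      exact mul_left_cancel₀ (ne_of_gt (hapos ts)) h4
    have hcosM_ge : cp ≤ Real.cos (x ts) := by
      rw [hcosM]
      exact le_trans hεKm (mul_le_mul_of_nonneg_left (hr ts).1 hεpos.le)
    have hMpi : π < x ts := by
      by_contra hc
      push_neg at hc
      have := Real.cos_lt_cos_of_nonneg_of_le_pi (Real.arccos_nonneg _) hc hM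
      rw [hcos_xp] at this
      linarith
    have hM2 : 2 * π - xp ≤ x ts := by
      by_contra hc
      push_neg at hc
      have h2 : xp < 2 * π - x ts := by linarith
      have h3 : 2 * π - x ts ≤ π := by linarith
      have := Real.cos_lt_cos_of_nonneg_of_le_pi (Real.arccos_nonneg _) h3 h2
      rw [hcos_xp, Real.cos_two_pi_sub] at this
      linarith
    obtain ⟨tc, htcle, htcval⟩ := htfuture ts
    exact band_trap x f hx xp (2 * π - xp) (by linarith) hfband_up ts tc htcle hM2
      (by rw [htcval]; exact hx₀_le_xp)
  -- lower bound
  have hlb : ∀ t, xm ≤ x t := by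
    by_contra hcon
    push_neg at hcon
    obtain ⟨t₁, ht₁⟩ := hcon
    obtain ⟨ts, htsmem, htsmin⟩ :=
      isCompact_Icc.exists_isMinOn (Set.nonempty_Icc.2 (by linarith : t₁ ≤ t₁ + T))
        hxc.continuousOn
    have hglob : ∀ t, x ts ≤ x t := by
      intro t
      obtain ⟨s, hs, hseq⟩ := hreduce t₁ t
      rw [← hseq]
      exact htsmin hs
    have hm : x ts < xm := lt_of_le_of_lt (hglob t₁) ht₁
    have hloc : IsLocalMin x ts := Filter.Eventually.of_forall hglob
    have hderiv0 : f ts = 0 := by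
      have h := hloc.deriv_eq_zero
      rwa [(hx ts).deriv] at h
    have hcosM : Real.cos (x ts) = ε * (μ ts / a ts) := by
      have h0 : -(a ts) * Real.cos (x ts) + ε * μ ts = 0 := hderiv0
      have hmul : a ts * (μ ts / a ts) = μ ts := by
        rw [mul_div_assoc']
        exact mul_div_cancel_left₀ _ (ne_of_gt (hapos _))
      have h4 : a ts * Real.cos (x ts) = a ts * (ε * (μ ts / a ts)) := by
        rw [mul_left_comm, hmul]; linarith
      exact mul_left_cancel₀ (ne_of_gt (hapos ts)) h4
    have hcosM_le : Real.cos (x ts) ≤ cm := by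
      rw [hcosM]
      exact le_trans (mul_le_mul_of_nonneg_left (hr ts).2 hεpos.le) hεKp
    have hm2 : x ts ≤ -xm := by
      by_contra hc
      push_neg at hc
      have habs : |x ts| < xm := abs_lt.2 ⟨hc, hm⟩
      have := Real.cos_lt_cos_of_nonneg_of_le_pi (abs_nonneg (x ts)) hxm_pi habs
      rw [hcos_xm, Real.cos_abs] at this
      linarith
    obtain ⟨tc, htcle, htcval⟩ := htfuture ts
    refine band_trap (fun t => -x t) (fun t => -f t) (fun t => (hx t).neg) (-xm) xm
      (by linarith) ?_ ts tc htcle (by show xm ≤ -x ts; linarith) ?_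
    · intro t ht
      simp only [Set.mem_Icc] at ht
      have hmem : x t ∈ Set.Icc (-xm) xm := ⟨by linarith [ht.2], by linarith [ht.1]⟩
      have := hfband_down t hmem
      show (0:ℝ) ≤ -f t
      linarith
    · show -x tc ≤ -xm
      rw [htcval]
      linarith
  refine ⟨fun t => ⟨hlb t, hub t⟩, fun y hy => ⟨lt_of_lt_of_le hxm_pos hy.1,
    lt_of_le_of_lt hy.2 hxp_half⟩⟩
end

section
/- Let a, μ : ℝ → ℝ be smooth T-periodic positive functions, x₀ ∈ (0, π/2), t₀ ∈ ℝ. Then the value ε for which the solution of ẋ = −a(t) cos x + ε μ(t) with x(t₀) = x₀ is T-periodic is unique. -/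
open Real Set Filter Topology

private lemma deriv_pos_left {f : ℝ → ℝ} {c d : ℝ} (hf : HasDerivAt f d c)
    (hd : 0 < d) (hc : f c = 0) : ∀ᶠ t in 𝓝[<] c, f t < 0 := by
  have h1 := hasDerivAt_iff_tendsto_slope.mp hf
  have h2 : ∀ᶠ t in 𝓝[≠] c, 0 < slope f c t := h1.eventually (eventually_gt_nhds hd)
  have h3 : 𝓝[<] c ≤ 𝓝[≠] c := nhdsWithin_mono c (fun x hx => ne_of_lt hx)
  filter_upwards [h3 h2, self_mem_nhdsWithin] with t ht htc
  have hlt : t - c < 0 := sub_neg.mpr htc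
  rw [slope_def_field, div_pos_iff] at ht
  rcases ht with ⟨h, h'⟩ | ⟨h, h'⟩
  · linarith
  · rw [hc] at h; linarith

private lemma deriv_pos_right {f : ℝ → ℝ} {c d : ℝ} (hf : HasDerivAt f d c)
    (hd : 0 < d) (hc : f c = 0) : ∀ᶠ t in 𝓝[>] c, 0 < f t := by
  have h1 := hasDerivAt_iff_tendsto_slope.mp hf
  have h2 : ∀ᶠ t in 𝓝[≠] c, 0 < slope f c t := h1.eventually (eventually_gt_nhds hd)
  have h3 : 𝓝[>] c ≤ 𝓝[≠] c := nhdsWithin_mono c (fun x hx => ne_of_gt hx)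
  filter_upwards [h3 h2, self_mem_nhdsWithin] with t ht htc
  have hlt : 0 < t - c := sub_pos.mpr htc
  rw [slope_def_field, div_pos_iff] at ht
  rcases ht with ⟨h, h'⟩ | ⟨h, h'⟩
  · rw [hc] at h; linarith
  · linarith

private lemma cmp_false (T t₀ : ℝ) (hT : 0 < T) (a μ : ℝ → ℝ)
    (hμpos : ∀ t, 0 < μ t)
    (ε₁ ε₂ : ℝ) (hlt : ε₁ < ε₂)
    (x₁ x₂ : ℝ → ℝ)
    (hx₁ : ∀ t, HasDerivAt x₁ (-(a t) * Real.cos (x₁ t) + ε₁ * μ t) t)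
    (hx₂ : ∀ t, HasDerivAt x₂ (-(a t) * Real.cos (x₂ t) + ε₂ * μ t) t)
    (hic : x₁ t₀ = x₂ t₀)
    (hper₁ : Function.Periodic x₁ T) (hper₂ : Function.Periodic x₂ T) : False := by
  set g : ℝ → ℝ := fun t => x₂ t - x₁ t with hg_def
  have hg : ∀ t, HasDerivAt g ((-(a t) * Real.cos (x₂ t) + ε₂ * μ t)
      - (-(a t) * Real.cos (x₁ t) + ε₁ * μ t)) t := fun t => (hx₂ t).sub (hx₁ t)
  have hgcont : Continuous g := by
    rw [continuous_iff_continuousAt]; exact fun t => (hg t).continuousAt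
  have hg0 : ∀ t, g t = 0 → HasDerivAt g ((ε₂ - ε₁) * μ t) t := by
    intro t ht
    have hx : x₂ t = x₁ t := by have : x₂ t - x₁ t = 0 := ht; linarith
    have := hg t
    rw [hx] at this
    convert this using 1
    ring
  have hgt₀ : g t₀ = 0 := by simp [hg_def, hic]
  have hgT : g (t₀ + T) = 0 := by
    simp [hg_def, hper₁ t₀, hper₂ t₀, hic]
  have hdpos : ∀ t, 0 < (ε₂ - ε₁) * μ t :=
    fun t => mul_pos (by linarith) (hμpos t)
  -- positivity just after t₀
  have hright : ∀ᶠ t in 𝓝[>] t₀, 0 < g t :=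
    deriv_pos_right (hg0 t₀ hgt₀) (hdpos t₀) hgt₀
  obtain ⟨v, hv_mem, hu⟩ := Filter.eventually_iff_exists_mem.mp hright
  obtain ⟨u', hu'⟩ := (mem_nhdsGT_iff_exists_Ioo_subset).mp hv_mem
  -- the set A of later points where g ≤ 0
  set A : Set ℝ := {t | t₀ < t ∧ t ≤ t₀ + T ∧ g t ≤ 0} with hA_def
  have hAne : (t₀ + T) ∈ A := ⟨by linarith, le_refl _, le_of_eq hgT⟩
  have hAbdd : BddBelow A := ⟨t₀, fun t ht => le_of_lt ht.1⟩
  set t₁ : ℝ := sInf A with ht₁_def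
  have ht₁le : t₁ ≤ t₀ + T := csInf_le hAbdd hAne
  -- t₁ > t₀ since g > 0 on (t₀, u')
  have ht₀lt : t₀ < t₁ := by
    have hu'mem : u' ∈ Ioi t₀ := hu'.1
    have hlow : ∀ t ∈ A, u' ≤ t := by
      intro t ht
      by_contra hc
      push_neg at hc
      have : t ∈ Ioo t₀ u' := ⟨ht.1, hc⟩
      have := hu t (hu'.2 this)
      linarith [ht.2.2]
    exact lt_of_lt_of_le hu'mem (le_csInf ⟨_, hAne⟩ hlow)
  -- g t₁ ≤ 0
  have hgt₁le : g t₁ ≤ 0 := by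
    have hcl : t₁ ∈ closure A := csInf_mem_closure ⟨_, hAne⟩ hAbdd
    have hsub : closure A ⊆ {t | g t ≤ 0} := by
      apply closure_minimal (fun t ht => ht.2.2)
      exact isClosed_le hgcont continuous_const
    exact hsub hcl
  -- g > 0 on (t₀, t₁)
  have hpos_mid : ∀ t ∈ Ioo t₀ t₁, 0 < g t := by
    intro t ht
    by_contra hc
    push_neg at hc
    have : t ∈ A := ⟨ht.1, le_trans (le_of_lt ht.2) ht₁le, hc⟩
    exact absurd (csInf_le hAbdd this) (not_le.mpr ht.2)
  -- g t₁ ≥ 0 by continuity from the left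
  have hgt₁ge : 0 ≤ g t₁ := by
    have hne : (𝓝[Ioo t₀ t₁] t₁).NeBot := by
      rw [← mem_closure_iff_nhdsWithin_neBot, closure_Ioo (ne_of_lt ht₀lt)]
      exact ⟨le_of_lt ht₀lt, le_refl _⟩
    have htend : Tendsto g (𝓝[Ioo t₀ t₁] t₁) (𝓝 (g t₁)) :=
      (hgcont.continuousAt).continuousWithinAt.tendsto
    exact ge_of_tendsto htend
      (eventually_nhdsWithin_of_forall (fun t ht => le_of_lt (hpos_mid t ht)))
  have hgt₁ : g t₁ = 0 := le_antisymm hgt₁le hgt₁ge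
  -- contradiction: derivative positive at t₁ forces g < 0 just left of t₁
  have hleft : ∀ᶠ t in 𝓝[<] t₁, g t < 0 :=
    deriv_pos_left (hg0 t₁ hgt₁) (hdpos t₁) hgt₁
  have hmem : Ioo t₀ t₁ ∈ 𝓝[<] t₁ := Ioo_mem_nhdsLT_of_mem ⟨ht₀lt, le_refl _⟩
  have : ∀ᶠ t in 𝓝[<] t₁, False := by
    filter_upwards [hleft, hmem] with t ht ht'
    exact absurd (hpos_mid t ht') (not_lt.mpr (le_of_lt ht))
  exact this.exists.choose_spec

theorem stmt_5 (T t₀ x₀ : ℝ) (hT : 0 < T) (a μ : ℝ → ℝ)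
    (ha : ContDiff ℝ (⊤ : ℕ∞) a) (hμ : ContDiff ℝ (⊤ : ℕ∞) μ)
    (haT : Function.Periodic a T) (hμT : Function.Periodic μ T)
    (hapos : ∀ t, 0 < a t) (hμpos : ∀ t, 0 < μ t)
    (hx₀ : x₀ ∈ Set.Ioo 0 (π / 2))
    (ε₁ ε₂ : ℝ) (hε₁ : 0 < ε₁) (hε₂ : 0 < ε₂)
    (x₁ x₂ : ℝ → ℝ)
    (hx₁ : ∀ t, HasDerivAt x₁ (-(a t) * Real.cos (x₁ t) + ε₁ * μ t) t)
    (hx₂ : ∀ t, HasDerivAt x₂ (-(a t) * Real.cos (x₂ t) + ε₂ * μ t) t)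
    (hic₁ : x₁ t₀ = x₀) (hic₂ : x₂ t₀ = x₀)
    (hper₁ : Function.Periodic x₁ T) (hper₂ : Function.Periodic x₂ T) :
    ε₁ = ε₂ := by
  rcases lt_trichotomy ε₁ ε₂ with h | h | h
  · exact absurd (cmp_false T t₀ hT a μ hμpos ε₁ ε₂ h x₁ x₂ hx₁ hx₂
      (by rw [hic₁, hic₂]) hper₁ hper₂) id
  · exact h
  · exact absurd (cmp_false T t₀ hT a μ hμpos ε₂ ε₁ h x₂ x₁ hx₂ hx₁
      (by rw [hic₁, hic₂]) hper₂ hper₁) id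
end

section
/- Consider the planar T-periodic (in x) system ẍ = Ψ₁(x) + Ψ₂(x)ẋ² with Ψ₁, Ψ₂ smooth T-periodic, Ψ₁ > 0, ∫₀ᵀ Ψ₂ < 0, and let ν : ℝ → (0,∞) be the smooth T-periodic function with ν² = z̄ the T-periodic solution of dz/dx = 2Ψ₁ + 2Ψ₂z. Then the set R = {(x, ẋ) : ẋ = ν(x)} is invariant: a solution starting with ẋ(0) = ν(x(0)) satisfies ẋ(t) = ν(x(t)) for all t ≥ 0. -/
open Real Set intervalIntegral

theorem stmt_18 (T : ℝ) (hT : 0 < T) (Ψ₁ Ψ₂ : ℝ → ℝ)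
    (hΨ₁ : ContDiff ℝ (⊤ : ℕ∞) Ψ₁) (hΨ₂ : ContDiff ℝ (⊤ : ℕ∞) Ψ₂)
    (hΨ₁T : Function.Periodic Ψ₁ T) (hΨ₂T : Function.Periodic Ψ₂ T)
    (hΨ₁pos : ∀ x, 0 < Ψ₁ x)
    (hint : ∫ τ in (0:ℝ)..T, Ψ₂ τ < 0)
    (ν : ℝ → ℝ) (hν : ContDiff ℝ (⊤ : ℕ∞) ν) (hνT : Function.Periodic ν T)
    (hνpos : ∀ x, 0 < ν x)
    (hνode : ∀ x, HasDerivAt (fun x => (ν x) ^ 2)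
        (2 * Ψ₁ x + 2 * Ψ₂ x * (ν x) ^ 2) x)
    (x v : ℝ → ℝ)
    (hx : ∀ t, HasDerivAt x (v t) t)
    (hv : ∀ t, HasDerivAt v (Ψ₁ (x t) + Ψ₂ (x t) * (v t) ^ 2) t)
    (hic : v 0 = ν (x 0)) :
    ∀ t ≥ (0:ℝ), v t = ν (x t) := by
  have hxc : Continuous x := by
    rw [continuous_iff_continuousAt]; exact fun t => (hx t).continuousAt
  have hvc : Continuous v := by
    rw [continuous_iff_continuousAt]; exact fun t => (hv t).continuousAt
  set a : ℝ → ℝ := fun t => 2 * Ψ₂ (x t) * v t with ha_def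
  have hac : Continuous a := (continuous_const.mul (hΨ₂.continuous.comp hxc)).mul hvc
  set g : ℝ → ℝ := fun t => v t ^ 2 - ν (x t) ^ 2 with hg_def
  have hg0 : g 0 = 0 := by simp [hg_def, hic]
  have hg' : ∀ t, HasDerivAt g (a t * g t) t := by
    intro t
    have h1 : HasDerivAt (fun t => v t ^ 2)
        (2 * v t ^ 1 * (Ψ₁ (x t) + Ψ₂ (x t) * (v t) ^ 2)) t := (hv t).pow 2
    have h2 : HasDerivAt (fun t => ν (x t) ^ 2)
        ((2 * Ψ₁ (x t) + 2 * Ψ₂ (x t) * (ν (x t)) ^ 2) * v t) t :=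
      (hνode (x t)).comp t (hx t)
    have := h1.sub h2
    refine this.congr_deriv ?_
    simp only [ha_def, hg_def]; ring
  set A : ℝ → ℝ := fun t => ∫ s in (0:ℝ)..t, a s with hA_def
  have hA' : ∀ t, HasDerivAt A (a t) t := by
    intro t
    exact intervalIntegral.integral_hasDerivAt_right (hac.intervalIntegrable _ _)
      hac.aestronglyMeasurable.stronglyMeasurableAtFilter hac.continuousAt
  set F : ℝ → ℝ := fun t => g t * Real.exp (-A t) with hF_def
  have hF' : ∀ t, HasDerivAt F 0 t := by
    intro t
    have hE : HasDerivAt (fun t => Real.exp (-A t)) (Real.exp (-A t) * (-a t)) t :=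
      ((hA' t).neg).exp
    have := (hg' t).mul hE
    refine this.congr_deriv ?_
    ring
  have hFconst : ∀ t, F t = F 0 := by
    intro t
    have : ∀ s, deriv F s = 0 := fun s => (hF' s).deriv
    exact is_const_of_deriv_eq_zero (fun s => (hF' s).differentiableAt) this t 0
  have hg0' : ∀ t, g t = 0 := by
    intro t
    have h := hFconst t
    simp only [hF_def, hg0, zero_mul] at h
    exact (mul_eq_zero.mp h).resolve_right (Real.exp_ne_zero _)
  have hsq : ∀ t, v t ^ 2 = ν (x t) ^ 2 := by
    intro t; have := hg0' t; simp [hg_def] at this; linarith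
  have hvne : ∀ t, v t ≠ 0 := by
    intro t h
    have h2 := hsq t
    rw [h] at h2
    nlinarith [hνpos (x t)]
  have hvpos : ∀ t, 0 < v t := by
    intro t
    by_contra h
    push_neg at h
    have hlt : v t < 0 := lt_of_le_of_ne h (hvne t)
    have h0 : v 0 > 0 := hic ▸ hνpos (x 0)
    have : (0:ℝ) ∈ Set.uIcc (v 0) (v t) := Set.mem_uIcc.mpr (Or.inr ⟨hlt.le, h0.le⟩)
    obtain ⟨s, _, hs⟩ := intermediate_value_uIcc (hvc.continuousOn (s := Set.uIcc 0 t)) this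
    exact hvne s hs
  intro t _
  exact (sq_eq_sq₀ (hvpos t).le (hνpos (x t)).le).mp (hsq t)
end
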